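/- Let r be a positive integer satisfying r < (1/2)·(log((1+√5)/2))⁻¹·log(n−1). Then every element of the kernel of SL(2,ℤ) → SL(2,ℤ/nℤ) of word length at most 2r with respect to the generating set {[[1,1],[0,1]], [[1,0],[1,1]]} is the identity. -/

import Mathlib

/-!
Equip real 2×2 matrices with the operator norm for the Euclidean norm. Each of the four
generators has norm at most the golden ratio `φ` (the largest singular value of
`!![1, 1; 0, 1]` is exactly `φ`), so a word of length `m` has norm at most `φ ^ m`, and every
entry of a matrix is bounded by its norm. For a word of length at most `2 r` the hypothesis on `r`
gives `φ ^ (2 r) < n - 1`, so every entry of `K - 1` has absolute value less than `n`; being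
divisible by `n`, it vanishes.
-/

open Real goldenRatio
open scoped Matrix Matrix.Norms.L2Operator

namespace Matrix

lemma norm_entry_le_l2_opNorm {𝕜 m n : Type*} [RCLike 𝕜] [Fintype m] [Fintype n] [DecidableEq n]
    (A : Matrix m n 𝕜) (i : m) (j : n) : ‖A i j‖ ≤ ‖A‖ :=
  let e : EuclideanSpace 𝕜 n := EuclideanSpace.single j 1
  calc ‖A i j‖ = ‖(EuclideanSpace.equiv m 𝕜).symm (A *ᵥ e.ofLp) i‖ := by simp [e]
    _ ≤ ‖(EuclideanSpace.equiv m 𝕜).symm (A *ᵥ e.ofLp)‖ := PiLp.norm_apply_le _ _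
    _ ≤ ‖A‖ * ‖e‖ := A.l2_opNorm_mulVec e
    _ = ‖A‖ := by rw [PiLp.norm_single, norm_one, mul_one]

lemma eq_one_of_map_intCast_eq_one {ι : Type*} [DecidableEq ι] {n : ℕ} {K : Matrix ι ι ℤ}
    (hK : K.map (Int.cast : ℤ → ZMod n) = 1) (hbound : ∀ i j, |K i j| + 1 < n) : K = 1 := by
  ext i j
  have hcong : ((K i j : ℤ) : ZMod n) = (((1 : Matrix ι ι ℤ) i j : ℤ) : ZMod n) := by
    simpa [one_apply, apply_ite] using congrFun₂ hK i j
  have hdvd := (ZMod.intCast_eq_intCast_iff_dvd_sub _ _ _).1 hcong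
  have hone : |(1 : Matrix ι ι ℤ) i j| ≤ 1 := by rw [one_apply]; split_ifs <;> simp
  have hsmall : |(1 : Matrix ι ι ℤ) i j - K i j| < n :=
    (abs_sub _ _).trans_lt (by linarith [hbound i j])
  exact (sub_eq_zero.1 (Int.eq_zero_of_abs_lt_dvd hdvd hsmall)).symm

end Matrix

lemma shear_sq_le_goldenRatio_sq_mul {t : ℝ} (ht : |t| ≤ 1) (u v : ℝ) :
    (u + t * v) ^ 2 + v ^ 2 ≤ φ ^ 2 * (u ^ 2 + v ^ 2) := by
  have hφ_mul_gap : φ * (φ ^ 2 * (u ^ 2 + v ^ 2) - ((u + t * v) ^ 2 + v ^ 2))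
      = (φ * u - t * v) ^ 2 + φ ^ 2 * (1 - t ^ 2) * v ^ 2 := by
    linear_combination (φ * u ^ 2 + (φ + t ^ 2) * v ^ 2) * goldenRatio_sq
  have ht2 : 0 ≤ 1 - t ^ 2 := sub_nonneg.2 ((sq_le_one_iff_abs_le_one t).2 ht)
  have hφ_mul_gap_nonneg : 0 ≤ φ * (φ ^ 2 * (u ^ 2 + v ^ 2) - ((u + t * v) ^ 2 + v ^ 2)) := by
    rw [hφ_mul_gap]; positivity
  linarith [(mul_nonneg_iff_of_pos_left goldenRatio_pos).1 hφ_mul_gap_nonneg]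

lemma l2_opNorm_upperShear_le {t : ℝ} (ht : |t| ≤ 1) : ‖!![1, t; 0, 1]‖ ≤ φ := by
  rw [Matrix.cstar_norm_def]
  refine ContinuousLinearMap.opNorm_le_bound _ goldenRatio_pos.le fun x => ?_
  rw [← pow_le_pow_iff_left₀ (norm_nonneg _) (by positivity) two_ne_zero, mul_pow,
    EuclideanSpace.norm_sq_eq, EuclideanSpace.norm_sq_eq]
  simpa [Fin.sum_univ_two, Matrix.mulVec, dotProduct] using
    shear_sq_le_goldenRatio_sq_mul ht (x 0) (x 1)

lemma l2_opNorm_lowerShear_le {t : ℝ} (ht : |t| ≤ 1) : ‖!![1, 0; t, 1]‖ ≤ φ := by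
  have htranspose : !![1, 0; t, 1] = (!![1, t; 0, 1])ᴴ := by
    ext i j; fin_cases i <;> fin_cases j <;> simp
  rw [htranspose, Matrix.l2_opNorm_conjTranspose]
  exact l2_opNorm_upperShear_le ht

def shearGenerators : Set (Matrix (Fin 2) (Fin 2) ℤ) :=
  {!![1, 1; 0, 1], !![1, 0; 1, 1], !![1, -1; 0, 1], !![1, 0; -1, 1]}

lemma l2_opNorm_map_le_goldenRatio_of_mem_shearGenerators {M : Matrix (Fin 2) (Fin 2) ℤ}
    (hM : M ∈ shearGenerators) : ‖M.map (Int.cast : ℤ → ℝ)‖ ≤ φ := by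
  have hmap (a b c d : ℤ) : (!![a, b; c, d]).map (Int.cast : ℤ → ℝ) = !![(a : ℝ), b; c, d] := by
    ext i j; fin_cases i <;> fin_cases j <;> rfl
  have habs : |(1 : ℝ)| ≤ 1 ∧ |(-1 : ℝ)| ≤ 1 := by norm_num
  rcases hM with rfl | rfl | rfl | rfl <;> rw [hmap] <;> push_cast
  exacts [l2_opNorm_upperShear_le habs.1, l2_opNorm_lowerShear_le habs.1,
    l2_opNorm_upperShear_le habs.2, l2_opNorm_lowerShear_le habs.2]

lemma l2_opNorm_map_prod_le_goldenRatio_pow {L : List (Matrix (Fin 2) (Fin 2) ℤ)}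
    (hL : ∀ M ∈ L, M ∈ shearGenerators) : ‖L.prod.map (Int.cast : ℤ → ℝ)‖ ≤ φ ^ L.length := by
  induction L with
  | nil => simp
  | cons M L ih =>
    have hmap : (M * L.prod).map (Int.cast : ℤ → ℝ) = M.map Int.cast * L.prod.map Int.cast :=
      Matrix.map_mul (f := Int.castRingHom ℝ)
    rw [List.prod_cons, hmap, List.length_cons, pow_succ']
    refine (Matrix.l2_opNorm_mul _ _).trans (mul_le_mul ?_ ?_ (norm_nonneg _) goldenRatio_pos.le)
    · exact l2_opNorm_map_le_goldenRatio_of_mem_shearGenerators (hL M List.mem_cons_self)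
    · exact ih fun N hN => hL N (List.mem_cons_of_mem M hN)

-- Only `|x|` can be bounded, since `log x = log |x|`.
lemma pow_lt_abs_of_lt_inv_log_mul_log {b x : ℝ} (hb : 1 < b) {k : ℕ}
    (hk : (k : ℝ) < (log b)⁻¹ * log x) : b ^ k < |x| := by
  have hlogb : 0 < log b := log_pos hb
  have hlt : log (b ^ k) < log |x| := by
    rw [log_pow, log_abs]; rwa [lt_inv_mul_iff₀ hlogb, mul_comm] at hk
  have hx : x ≠ 0 := by
    rintro rfl
    simp only [log_zero, mul_zero] at hk
    exact absurd hk (Nat.cast_nonneg k).not_gt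
  exact (log_lt_log_iff (by positivity) (abs_pos.2 hx)).1 hlt

theorem kernel_ball_trivial_general (n : ℕ) (r : ℕ)
    (hrn : (r : ℝ) < (1 / 2) * (Real.log ((1 + Real.sqrt 5) / 2))⁻¹ * Real.log (n - 1))
    (K : Matrix (Fin 2) (Fin 2) ℤ)
    (hK : ∃ L : List (Matrix (Fin 2) (Fin 2) ℤ), L.length ≤ 2 * r ∧
      (∀ M ∈ L, M ∈ ({!![1, 1; 0, 1], !![1, 0; 1, 1], !![1, -1; 0, 1],
        !![1, 0; -1, 1]} : Set (Matrix (Fin 2) (Fin 2) ℤ))) ∧ K = L.prod)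
    (hker : K.map (Int.cast : ℤ → ZMod n) = 1) :
    K = 1 := by
  obtain ⟨L, hlen, hgen, rfl⟩ := hK
  have hrn' : (r : ℝ) < 1 / 2 * (log φ)⁻¹ * log (n - 1) := hrn
  have hφr : φ ^ (2 * r) < |(n : ℝ) - 1| :=
    pow_lt_abs_of_lt_inv_log_mul_log one_lt_goldenRatio (by push_cast; linarith)
  have hn : φ ^ (2 * r) < (n : ℝ) - 1 := by
    have hone : 1 ≤ φ ^ (2 * r) := one_le_pow₀ one_lt_goldenRatio.le
    rcases lt_abs.1 hφr with h | h
    · exact h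
    · linarith [(Nat.cast_nonneg n : (0 : ℝ) ≤ n)]
  refine Matrix.eq_one_of_map_intCast_eq_one hker fun i j => ?_
  have hentry : |(L.prod i j : ℝ)| < n - 1 :=
    calc |(L.prod i j : ℝ)| ≤ ‖L.prod.map (Int.cast : ℤ → ℝ)‖ :=
          by simpa using Matrix.norm_entry_le_l2_opNorm (L.prod.map (Int.cast : ℤ → ℝ)) i j
      _ ≤ φ ^ L.length := l2_opNorm_map_prod_le_goldenRatio_pow hgen
      _ ≤ φ ^ (2 * r) := pow_le_pow_right₀ one_lt_goldenRatio.le hlen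
      _ < n - 1 := hn
  have hcast : ((|L.prod i j| + 1 : ℤ) : ℝ) < n := by push_cast; linarith
  exact_mod_cast hcast

/-- If r < (1/2)·(log((1+√5)/2))⁻¹·log(n-1), then every element of the kernel of the
reduction SL(2,ℤ) → SL(2,ℤ/n) of word length at most 2r with respect to the generators
[[1,1],[0,1]] and [[1,0],[1,1]] (and their inverses) is the identity. -/
theorem kernel_ball_trivial (n : ℕ) (r : ℕ) (hr : 1 ≤ r)
    (hrn : (r : ℝ) < (1 / 2) * (Real.log ((1 + Real.sqrt 5) / 2))⁻¹ * Real.log (n - 1))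
    (K : Matrix (Fin 2) (Fin 2) ℤ)
    (hK : ∃ L : List (Matrix (Fin 2) (Fin 2) ℤ), L.length ≤ 2 * r ∧
      (∀ M ∈ L, M ∈ ({!![1, 1; 0, 1], !![1, 0; 1, 1], !![1, -1; 0, 1],
        !![1, 0; -1, 1]} : Set (Matrix (Fin 2) (Fin 2) ℤ))) ∧ K = L.prod)
    (hker : K.map (Int.cast : ℤ → ZMod n) = 1) :
    K = 1 :=
  kernel_ball_trivial_general n r hrn K hK hker
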